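/- arXiv:gr-qc/0205011 — 4 statements merged into one kernel-verified Lean document; each statement's English description precedes it below -/
import Mathlib

section
/- Let k ∈ {−1,0,1}, ε ∈ {0,1} with εk = 0, β > 0, and let b : I → (0,∞) be twice differentiable on an open interval I. Then for every t ∈ I, the perfect-fluid (Segré type) condition G₀₃(t)² = (G₀₀(t) + G₂₂(t))(G₃₃(t) − G₂₂(t)) holds if and only if (b(t)b''(t) − b'(t)² − k)·(β²(b(t)b''(t) + b'(t)² + k) + 2ε b(t)²) = 0. -/
/-- Orthonormal-tetrad Einstein tensor component `G₀₀` of the LRS metric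
`ds² = −dt² + β²dz² + b(t)²[(dr − εr dz)² + Σ(r,k)²dφ²]`. -/
noncomputable def G00 (k ε β : ℝ) (b : ℝ → ℝ) (t : ℝ) : ℝ :=
  (k + (deriv b t) ^ 2) / (b t) ^ 2 - 3 * ε / β ^ 2

/-- Component `G₀₃`. -/
noncomputable def G03 (k ε β : ℝ) (b : ℝ → ℝ) (t : ℝ) : ℝ :=
  -2 * ε * (deriv b t) / (β * b t)

/-- Component `G₁₁ = G₂₂`. -/
noncomputable def G22 (k ε β : ℝ) (b : ℝ → ℝ) (t : ℝ) : ℝ :=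
  -(deriv (deriv b) t) / (b t) + ε / β ^ 2

/-- Component `G₃₃`. -/
noncomputable def G33 (k ε β : ℝ) (b : ℝ → ℝ) (t : ℝ) : ℝ :=
  -2 * (deriv (deriv b) t) / (b t) - (k + (deriv b t) ^ 2) / (b t) ^ 2 + ε / β ^ 2

/-- Energy density `ρ = G₂₂ + G₀₀ − G₃₃`. -/
noncomputable def rho (k ε β : ℝ) (b : ℝ → ℝ) (t : ℝ) : ℝ :=
  G22 k ε β b t + G00 k ε β b t - G33 k ε β b t

/-- Pressure `p = G₂₂`. -/
noncomputable def pres (k ε β : ℝ) (b : ℝ → ℝ) (t : ℝ) : ℝ :=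
  G22 k ε β b t

/-- For the LRS metric above, at every `t` in the interval, the perfect-fluid
(Segré type) condition `G₀₃² = (G₀₀ + G₂₂)(G₃₃ − G₂₂)` holds iff
`(b b'' − b'² − k)·(β²(b b'' + b'² + k) + 2ε b²) = 0`. -/
theorem perfect_fluid_condition (k ε β : ℝ)
    (hk : k = -1 ∨ k = 0 ∨ k = 1) (hε : ε = 0 ∨ ε = 1) (hεk : ε * k = 0) (hβ : 0 < β)
    (I : Set ℝ) (hI : ∃ x y : ℝ, I = Set.Ioo x y)
    (b : ℝ → ℝ) (hbpos : ∀ t ∈ I, 0 < b t)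
    (hb1 : ∀ t ∈ I, DifferentiableAt ℝ b t)
    (hb2 : ∀ t ∈ I, DifferentiableAt ℝ (deriv b) t) :
    ∀ t ∈ I,
      ((G03 k ε β b t) ^ 2 =
          (G00 k ε β b t + G22 k ε β b t) * (G33 k ε β b t - G22 k ε β b t) ↔
        (b t * deriv (deriv b) t - (deriv b t) ^ 2 - k) *
            (β ^ 2 * (b t * deriv (deriv b) t + (deriv b t) ^ 2 + k) + 2 * ε * (b t) ^ 2) =
          0) := by
  intro t ht
  have hB : 0 < b t := hbpos t ht
  have hB0 : b t ≠ 0 := ne_of_gt hB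
  have hβ0 : β ≠ 0 := ne_of_gt hβ
  have key : G03 k ε β b t ^ 2 -
      (G00 k ε β b t + G22 k ε β b t) * (G33 k ε β b t - G22 k ε β b t) =
      -((b t * deriv (deriv b) t - (deriv b t) ^ 2 - k) *
        (β ^ 2 * (b t * deriv (deriv b) t + (deriv b t) ^ 2 + k) + 2 * ε * (b t) ^ 2)) /
        (β ^ 2 * (b t) ^ 4) := by
    simp only [G03, G00, G22, G33]
    rcases hε with h | h
    · subst h; field_simp; ring
    · subst h
      have hk0 : k = 0 := by linarith [hεk]
      subst hk0
      field_simp; ring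
  constructor
  · intro h
    have h2 : -((b t * deriv (deriv b) t - (deriv b t) ^ 2 - k) *
        (β ^ 2 * (b t * deriv (deriv b) t + (deriv b t) ^ 2 + k) + 2 * ε * (b t) ^ 2)) /
        (β ^ 2 * (b t) ^ 4) = 0 := by rw [← key]; rw [h]; ring
    have hd : (β ^ 2 * (b t) ^ 4) ≠ 0 := by positivity
    field_simp [hd] at h2
    linarith [h2]
  · intro h
    have h2 : G03 k ε β b t ^ 2 -
      (G00 k ε β b t + G22 k ε β b t) * (G33 k ε β b t - G22 k ε β b t) = 0 := by
      rw [key, h]; ring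
    linarith [h2]
end

section
/- Let β > 0 and let b : I → (0,∞) be twice differentiable on an open interval I. Then β²(b(t)b''(t) + b'(t)²) + 2b(t)² = 0 for all t ∈ I if and only if there exist constants c > 0 and φ₀ ∈ ℝ such that b(t)² = c·sin(2t/β + φ₀) for all t ∈ I. -/
/-!
With `u = b²` one has `u'' = 2 (b'² + b b'')`, so the equation says `u'' + (2/β)² u = 0`.
On an interval the solutions of this oscillator equation are `A cos (2t/β) + B sin (2t/β)`,
which is `c sin (2t/β + φ₀)` with `c = ‖(A, B)‖`; positivity of `b` rules out `c = 0`.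
-/

open Real Set Filter Topology

theorem exists_eq_mul_cos_add_mul_sin_of_hasDerivAt {I : Set ℝ} (hIo : IsOpen I)
    (hIc : IsPreconnected I) {ω : ℝ} (hω : ω ≠ 0) {u v : ℝ → ℝ}
    (hu : ∀ t ∈ I, HasDerivAt u (v t) t) (hv : ∀ t ∈ I, HasDerivAt v (-(ω ^ 2 * u t)) t) :
    ∃ A B : ℝ, ∀ t ∈ I, u t = A * cos (ω * t) + B * sin (ω * t) := by
  have hcos (t : ℝ) : HasDerivAt (fun s ↦ cos (ω * s)) (-sin (ω * t) * ω) t := by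
    simpa using ((hasDerivAt_id t).const_mul ω).cos
  have hsin (t : ℝ) : HasDerivAt (fun s ↦ sin (ω * s)) (cos (ω * t) * ω) t := by
    simpa using ((hasDerivAt_id t).const_mul ω).sin
  -- the phase point `(u, v / ω)` turns with angular speed `-ω`; turning it back gives `(A, B)`
  have hA' : ∀ t ∈ I, HasDerivAt (fun s ↦ u s * cos (ω * s) - v s / ω * sin (ω * s)) 0 t :=
    fun t ht ↦ (((hu t ht).mul (hcos t)).sub (((hv t ht).div_const ω).mul (hsin t))).congr_deriv
      (by field_simp; ring)
  have hB' : ∀ t ∈ I, HasDerivAt (fun s ↦ u s * sin (ω * s) + v s / ω * cos (ω * s)) 0 t :=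
    fun t ht ↦ (((hu t ht).mul (hsin t)).add (((hv t ht).div_const ω).mul (hcos t))).congr_deriv
      (by field_simp; ring)
  obtain ⟨A, hA⟩ := hIo.exists_is_const_of_deriv_eq_zero hIc
    (fun t ht ↦ (hA' t ht).differentiableAt.differentiableWithinAt)
    (fun t ht ↦ (hA' t ht).deriv)
  obtain ⟨B, hB⟩ := hIo.exists_is_const_of_deriv_eq_zero hIc
    (fun t ht ↦ (hB' t ht).differentiableAt.differentiableWithinAt)
    (fun t ht ↦ (hB' t ht).deriv)
  refine ⟨A, B, fun t ht ↦ ?_⟩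
  rw [← hA t ht, ← hB t ht]
  linear_combination (-u t) * sin_sq_add_cos_sq (ω * t)

theorem exists_pos_mul_cos_add_mul_sin_eq_mul_sin {A B : ℝ} (h : A ≠ 0 ∨ B ≠ 0) :
    ∃ c φ : ℝ, 0 < c ∧ ∀ x, A * cos x + B * sin x = c * sin (x + φ) := by
  set z : ℂ := ⟨B, A⟩
  have hz : z ≠ 0 := fun h0 ↦ by
    rcases h with h | h
    · exact h (congrArg Complex.im h0)
    · exact h (congrArg Complex.re h0)
  have hc : 0 < ‖z‖ := norm_pos_iff.mpr hz
  refine ⟨‖z‖, z.arg, hc, fun x ↦ ?_⟩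
  rw [sin_add, Complex.cos_arg hz, Complex.sin_arg]
  field_simp
  ring

theorem exists_pos_mul_sin_of_deriv_deriv_eq {I : Set ℝ} (hIo : IsOpen I)
    (hIc : IsPreconnected I) {ω : ℝ} (hω : ω ≠ 0) {u : ℝ → ℝ}
    (hu : ∀ t ∈ I, DifferentiableAt ℝ u t)
    (hu' : ∀ t ∈ I, DifferentiableAt ℝ (deriv u) t) (hu0 : ∀ t ∈ I, u t ≠ 0)
    (hode : ∀ t ∈ I, deriv (deriv u) t = -(ω ^ 2 * u t)) :
    ∃ c φ : ℝ, 0 < c ∧ ∀ t ∈ I, u t = c * sin (ω * t + φ) := by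
  obtain ⟨A, B, hAB⟩ := exists_eq_mul_cos_add_mul_sin_of_hasDerivAt hIo hIc hω
    (fun t ht ↦ (hu t ht).hasDerivAt) (fun t ht ↦ hode t ht ▸ (hu' t ht).hasDerivAt)
  rcases I.eq_empty_or_nonempty with rfl | ⟨t₀, ht₀⟩
  · exact ⟨1, 0, one_pos, by simp⟩
  have hAB₀ : A ≠ 0 ∨ B ≠ 0 := by
    by_contra! h
    exact hu0 t₀ ht₀ (by simpa [h.1, h.2] using hAB t₀ ht₀)
  obtain ⟨c, φ, hc, hcφ⟩ := exists_pos_mul_cos_add_mul_sin_eq_mul_sin hAB₀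
  exact ⟨c, φ, hc, fun t ht ↦ (hAB t ht).trans (hcφ _)⟩

theorem deriv_deriv_mul_sin (c ω φ t : ℝ) :
    deriv (deriv fun s ↦ c * sin (ω * s + φ)) t = -(ω ^ 2 * (c * sin (ω * t + φ))) := by
  have hlin (s : ℝ) : HasDerivAt (fun s ↦ ω * s + φ) ω s := by
    simpa using ((hasDerivAt_id s).const_mul ω).add_const φ
  have hderiv : deriv (fun s ↦ c * sin (ω * s + φ)) = fun s ↦ c * (cos (ω * s + φ) * ω) :=
    funext fun s ↦ ((hlin s).sin.const_mul c).deriv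
  rw [hderiv, (((hlin t).cos.mul_const ω).const_mul c).deriv]
  ring

theorem deriv_deriv_eq_of_eqOn_mul_sin {I : Set ℝ} (hIo : IsOpen I) {u : ℝ → ℝ}
    {c ω φ : ℝ} (h : ∀ t ∈ I, u t = c * sin (ω * t + φ)) :
    ∀ t ∈ I, deriv (deriv u) t = -(ω ^ 2 * u t) := by
  intro t ht
  have hloc : u =ᶠ[𝓝 t] fun s ↦ c * sin (ω * s + φ) :=
    eventually_of_mem (hIo.mem_nhds ht) h
  rw [hloc.deriv.deriv_eq, deriv_deriv_mul_sin, h t ht]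

theorem hasDerivAt_deriv_sq {s : Set ℝ} (hs : IsOpen s) {b : ℝ → ℝ}
    (hb : ∀ t ∈ s, DifferentiableAt ℝ b t) {t : ℝ} (ht : t ∈ s)
    (hb' : DifferentiableAt ℝ (deriv b) t) :
    HasDerivAt (deriv fun s ↦ b s ^ 2) (2 * (deriv b t ^ 2 + b t * deriv (deriv b) t)) t := by
  have hloc : (deriv fun s ↦ b s ^ 2) =ᶠ[𝓝 t] fun s ↦ 2 * (b s * deriv b s) :=
    eventually_of_mem (hs.mem_nhds ht) fun s hs ↦ by
      rw [((hb s hs).hasDerivAt.fun_pow 2).deriv]; ring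
  refine (((hb t ht).hasDerivAt.mul hb'.hasDerivAt).const_mul 2).congr_of_eventuallyEq hloc
    |>.congr_deriv ?_
  ring

/-- For `β > 0` and a twice differentiable positive `b` on an open interval `I`,
`β²(b b'' + b'²) + 2b² = 0` on `I` iff there exist `c > 0` and `φ₀ ∈ ℝ` with
`b(t)² = c·sin(2t/β + φ₀)` on `I`. -/
theorem second_factor_eps_one_solution (β : ℝ) (hβ : 0 < β)
    (I : Set ℝ) (hI : ∃ x y : ℝ, I = Set.Ioo x y)
    (b : ℝ → ℝ) (hbpos : ∀ t ∈ I, 0 < b t)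
    (hb1 : ∀ t ∈ I, DifferentiableAt ℝ b t)
    (hb2 : ∀ t ∈ I, DifferentiableAt ℝ (deriv b) t) :
    (∀ t ∈ I,
        β ^ 2 * (b t * deriv (deriv b) t + (deriv b t) ^ 2) + 2 * (b t) ^ 2 = 0) ↔
      ∃ c φ₀ : ℝ, 0 < c ∧ ∀ t ∈ I, (b t) ^ 2 = c * Real.sin (2 * t / β + φ₀) := by
  obtain ⟨x, y, rfl⟩ := hI
  have hsq' (t : ℝ) (ht : t ∈ Ioo x y) := hasDerivAt_deriv_sq isOpen_Ioo hb1 ht (hb2 t ht)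
  have hode (t : ℝ) (ht : t ∈ Ioo x y) :
      β ^ 2 * (b t * deriv (deriv b) t + deriv b t ^ 2) + 2 * b t ^ 2 = 0 ↔
        deriv (deriv fun s ↦ b s ^ 2) t = -((2 / β) ^ 2 * b t ^ 2) := by
    rw [(hsq' t ht).deriv]
    field_simp
    constructor <;> intro h <;> linear_combination h
  have hphase (t : ℝ) : 2 * t / β = 2 / β * t := by ring
  simp only [forall₂_congr hode, hphase]
  exact ⟨exists_pos_mul_sin_of_deriv_deriv_eq isOpen_Ioo isPreconnected_Ioo (by positivity)
      (fun t ht ↦ (hb1 t ht).pow 2) (fun t ht ↦ (hsq' t ht).differentiableAt)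
      (fun t ht ↦ (pow_pos (hbpos t ht) 2).ne'),
    fun ⟨_, _, _, h⟩ ↦ deriv_deriv_eq_of_eqOn_mul_sin isOpen_Ioo h⟩
end

section
/- Let β > 0, c₁ > 0, and take ε = 1, k = 0 and b(t) = c₁·√(sin(2t/β)) on the interval I = (0, πβ/2). Then the energy density satisfies ρ(t) = (1/β²)(1/sin²(2t/β) − 6) for all t ∈ I, also ρ(t) = p(t) − 8/β², and ρ takes both strictly positive and strictly negative values on I (the sign change occurring where sin(2t/β) = 1/√6); hence the weak energy condition ρ ≥ 0 cannot hold on all of I. -/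
/-! With `θ = 2t/β` and `b = c₁ √(sin θ)`, the logarithmic derivatives are `b'/b = cot θ / β` and
`b''/b = -2/β² - cot² θ / β²`, independently of `c₁`. Hence `ρ = b''/b + 2 (b'/b)² - 3/β²
= (1/sin² θ - 6)/β²` and `p = -b''/b + 1/β² = (1/sin² θ + 2)/β²`. On `I` the angle `θ` runs over
`(0, π)`, so `sin θ` gets close to `0`, where `ρ > 0`, and reaches `1`, where `ρ = -5/β²`. -/

open Real Filter Topology

lemma rho_eq_logDeriv (k ε β : ℝ) (b : ℝ → ℝ) (t : ℝ) :
    rho k ε β b t = deriv (deriv b) t / b t + 2 * k / b t ^ 2 + 2 * (deriv b t / b t) ^ 2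
      - 3 * ε / β ^ 2 := by
  unfold rho G00 G22 G33
  ring

lemma logDerivs_const_mul_sqrt {g g' : ℝ → ℝ} {g'' c t : ℝ} (hc : c ≠ 0) (hgt : 0 < g t)
    (hg : ∀ᶠ s in 𝓝 t, HasDerivAt g (g' s) s) (hg' : HasDerivAt g' g'' t) :
    deriv (fun s => c * √(g s)) t / (c * √(g t)) = g' t / (2 * g t) ∧
      deriv (deriv fun s => c * √(g s)) t / (c * √(g t)) =
        g'' / (2 * g t) - (g' t / (2 * g t)) ^ 2 := by
  have hpos : ∀ᶠ s in 𝓝 t, 0 < g s :=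
    hg.self_of_nhds.continuousAt.eventually (lt_mem_nhds hgt)
  have hb : ∀ᶠ s in 𝓝 t,
      HasDerivAt (fun s => c * √(g s)) (c * (g' s / (2 * √(g s)))) s := by
    filter_upwards [hg, hpos] with s hgs hs
    exact (hgs.sqrt hs.ne').const_mul c
  have hb' : deriv (fun s => c * √(g s)) =ᶠ[𝓝 t] fun s => c * (g' s / (2 * √(g s))) :=
    hb.mono fun s hs => hs.deriv
  have hsqrt : HasDerivAt (fun s => 2 * √(g s)) (2 * (g' t / (2 * √(g t)))) t :=
    (hg.self_of_nhds.sqrt hgt.ne').const_mul 2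
  have hroot : 0 < √(g t) := sqrt_pos.2 hgt
  have hb'' : HasDerivAt (fun s => c * (g' s / (2 * √(g s))))
      (c * ((g'' * (2 * √(g t)) - g' t * (2 * (g' t / (2 * √(g t))))) / (2 * √(g t)) ^ 2)) t :=
    (hg'.div hsqrt (by positivity)).const_mul c
  rw [hb'.deriv_eq, hb''.deriv, hb.self_of_nhds.deriv]
  have hsq : g t = √(g t) ^ 2 := (sq_sqrt hgt.le).symm
  set r := √(g t)
  rw [hsq]
  constructor <;> field_simp

lemma sin_two_mul_div_pos {β t : ℝ} (hβ : 0 < β) (ht : t ∈ Set.Ioo 0 (π * β / 2)) :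
    0 < sin (2 * t / β) := by
  apply sin_pos_of_pos_of_lt_pi (div_pos (by linarith [ht.1]) hβ)
  rw [div_lt_iff₀ hβ]
  linarith [ht.2]

lemma logDerivs_const_mul_sqrt_sin {β c t : ℝ} (hβ : 0 < β) (hc : c ≠ 0)
    (ht : 0 < sin (2 * t / β)) :
    deriv (fun s => c * √(sin (2 * s / β))) t / (c * √(sin (2 * t / β))) =
        cos (2 * t / β) / (β * sin (2 * t / β)) ∧
      deriv (deriv fun s => c * √(sin (2 * s / β))) t / (c * √(sin (2 * t / β))) =
        -2 / β ^ 2 - (cos (2 * t / β) / (β * sin (2 * t / β))) ^ 2 := by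
  have hlin : ∀ s : ℝ, HasDerivAt (fun s => 2 * s / β) (2 / β) s := fun s => by
    simpa using ((hasDerivAt_id s).const_mul 2).div_const β
  obtain ⟨h1, h2⟩ := logDerivs_const_mul_sqrt (g := fun s => sin (2 * s / β)) hc ht
    (Eventually.of_forall fun s => (hlin s).sin) ((hlin t).cos.mul_const (2 / β))
  rw [h1, h2]
  have hβ' : β ≠ 0 := hβ.ne'
  constructor <;> field_simp

lemma rho_const_mul_sqrt_sin {β c t : ℝ} (hβ : 0 < β) (hc : c ≠ 0)
    (ht : 0 < sin (2 * t / β)) :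
    rho 0 1 β (fun s => c * √(sin (2 * s / β))) t =
      (1 / β ^ 2) * (1 / sin (2 * t / β) ^ 2 - 6) := by
  obtain ⟨h1, h2⟩ := logDerivs_const_mul_sqrt_sin hβ hc ht
  rw [rho_eq_logDeriv, h1, h2, mul_zero, zero_div, add_zero]
  have hβ' : β ≠ 0 := hβ.ne'
  field_simp
  linear_combination sin_sq_add_cos_sq (2 * t / β)

lemma pres_const_mul_sqrt_sin {β c t : ℝ} (hβ : 0 < β) (hc : c ≠ 0)
    (ht : 0 < sin (2 * t / β)) :
    pres 0 1 β (fun s => c * √(sin (2 * s / β))) t =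
      (1 / β ^ 2) * (1 / sin (2 * t / β) ^ 2 + 2) := by
  have h2 := (logDerivs_const_mul_sqrt_sin hβ hc ht).2
  rw [pres, G22, neg_div, h2]
  have hβ' : β ≠ 0 := hβ.ne'
  field_simp
  linear_combination sin_sq_add_cos_sq (2 * t / β)

lemma one_div_sq_sub_six_eq_zero_iff {s : ℝ} (hs : 0 < s) :
    1 / s ^ 2 - 6 = 0 ↔ s = 1 / √6 := by
  have h6 : (1 / √6) ^ 2 = 1 / 6 := by rw [div_pow, sq_sqrt (by norm_num), one_pow]
  rw [← pow_left_inj₀ hs.le (by positivity) two_ne_zero, h6, sub_eq_zero]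
  constructor <;> intro h <;> field_simp at h ⊢ <;> linarith

lemma exists_mem_Ioo_one_div_sin_sq_sub_six_pos {β : ℝ} (hβ : 0 < β) :
    ∃ t ∈ Set.Ioo 0 (π * β / 2), 0 < 1 / β ^ 2 * (1 / sin (2 * t / β) ^ 2 - 6) := by
  have ht : β / 6 ∈ Set.Ioo 0 (π * β / 2) :=
    ⟨by positivity, by linarith [mul_lt_mul_of_pos_right pi_gt_three hβ]⟩
  have hsin : sin (2 * (β / 6) / β) < 1 / 3 := by
    rw [show 2 * (β / 6) / β = 1 / 3 by field_simp; ring]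
    exact sin_lt (by norm_num)
  have hpos := sin_two_mul_div_pos hβ ht
  refine ⟨_, ht, mul_pos (by positivity) (sub_pos.2 ?_)⟩
  rw [lt_div_iff₀ (by positivity)]
  nlinarith

lemma exists_mem_Ioo_one_div_sin_sq_sub_six_neg {β : ℝ} (hβ : 0 < β) :
    ∃ t ∈ Set.Ioo 0 (π * β / 2), 1 / β ^ 2 * (1 / sin (2 * t / β) ^ 2 - 6) < 0 := by
  have ht : π * β / 4 ∈ Set.Ioo 0 (π * β / 2) :=
    ⟨by positivity, by linarith [mul_pos pi_pos hβ]⟩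
  have hsin : sin (2 * (π * β / 4) / β) = 1 := by
    rw [← sin_pi_div_two]; congr 1; field_simp; ring
  refine ⟨_, ht, ?_⟩
  rw [hsin]
  exact mul_neg_of_pos_of_neg (by positivity) (by norm_num)

/-- For `ε = 1`, `k = 0`, `β > 0`, `c₁ > 0` and `b(t) = c₁√(sin(2t/β))` on
`I = (0, πβ/2)`, the energy density is `ρ(t) = (1/β²)(1/sin²(2t/β) − 6)`, satisfies
`ρ = p − 8/β²`, vanishes exactly where `sin(2t/β) = 1/√6`, and takes both strictly
positive and strictly negative values on `I`; hence the weak energy condition `ρ ≥ 0`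
fails on `I`. -/
theorem eps_one_energy_density_changes_sign (β c₁ : ℝ) (hβ : 0 < β) (hc : 0 < c₁) :
    (∀ t ∈ Set.Ioo 0 (Real.pi * β / 2),
        rho 0 1 β (fun s => c₁ * Real.sqrt (Real.sin (2 * s / β))) t =
          (1 / β ^ 2) * (1 / (Real.sin (2 * t / β)) ^ 2 - 6)) ∧
    (∀ t ∈ Set.Ioo 0 (Real.pi * β / 2),
        rho 0 1 β (fun s => c₁ * Real.sqrt (Real.sin (2 * s / β))) t =
          pres 0 1 β (fun s => c₁ * Real.sqrt (Real.sin (2 * s / β))) t - 8 / β ^ 2) ∧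
    (∀ t ∈ Set.Ioo 0 (Real.pi * β / 2),
        (rho 0 1 β (fun s => c₁ * Real.sqrt (Real.sin (2 * s / β))) t = 0 ↔
          Real.sin (2 * t / β) = 1 / Real.sqrt 6)) ∧
    (∃ t ∈ Set.Ioo 0 (Real.pi * β / 2),
        0 < rho 0 1 β (fun s => c₁ * Real.sqrt (Real.sin (2 * s / β))) t) ∧
    (∃ t ∈ Set.Ioo 0 (Real.pi * β / 2),
        rho 0 1 β (fun s => c₁ * Real.sqrt (Real.sin (2 * s / β))) t < 0) ∧
    ¬ (∀ t ∈ Set.Ioo 0 (Real.pi * β / 2),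
        0 ≤ rho 0 1 β (fun s => c₁ * Real.sqrt (Real.sin (2 * s / β))) t) := by
  have hrho t (ht : t ∈ Set.Ioo 0 (π * β / 2)) :=
    rho_const_mul_sqrt_sin hβ hc.ne' (sin_two_mul_div_pos hβ ht)
  have hneg : ∃ t ∈ Set.Ioo 0 (π * β / 2),
      rho 0 1 β (fun s => c₁ * √(sin (2 * s / β))) t < 0 := by
    obtain ⟨t, ht, hlt⟩ := exists_mem_Ioo_one_div_sin_sq_sub_six_neg hβ
    exact ⟨t, ht, hrho t ht ▸ hlt⟩
  refine ⟨hrho, fun t ht => ?_, fun t ht => ?_, ?_, hneg, fun hwec => ?_⟩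
  · rw [hrho t ht, pres_const_mul_sqrt_sin hβ hc.ne' (sin_two_mul_div_pos hβ ht)]
    ring
  · rw [hrho t ht, mul_eq_zero, or_iff_right (by positivity)]
    exact one_div_sq_sub_six_eq_zero_iff (sin_two_mul_div_pos hβ ht)
  · obtain ⟨t, ht, hlt⟩ := exists_mem_Ioo_one_div_sin_sq_sub_six_pos hβ
    exact ⟨t, ht, hrho t ht ▸ hlt⟩
  · obtain ⟨t, ht, hlt⟩ := hneg
    exact (hwec t ht).not_gt hlt
end

section
/- Let ε = 0, k ∈ {−1,0,1}, β > 0, α, c ∈ ℝ, let I be an open interval on which −k t² + α t + c > 0, and set b(t) = √(−k t² + α t + c). Then for all t ∈ I the energy density and pressure satisfy ρ(t) = p(t) = (α² + 4kc)/(4(−k t² + α t + c)²); in particular the source is a stiff fluid (ρ = p). -/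
/-!
With `ε = 0` the components give `p = -b''/b` and `ρ = b''/b + 2(k + b'²)/b²`, so both equal
`(k + b'²)/b²` exactly when `b b'' + b'² + k = 0`, i.e. `(b²)'' = -2k`. For `b = √q` this says
`q'' = -2k`, which holds for `q = -k t² + α t + c`; then `(k + b'²)/b² = (q'² + 4kq)/(4q²)`,
and `q'² + 4kq = α² + 4kc` is the discriminant of `q`.
-/

section Einstein

variable {β : ℝ} {b : ℝ → ℝ} {t : ℝ}

lemma pres_zero_eq_of_mul_deriv_deriv {k : ℝ} (hb : b t ≠ 0)
    (h : b t * deriv (deriv b) t = -(k + deriv b t ^ 2)) :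
    pres k 0 β b t = (k + deriv b t ^ 2) / b t ^ 2 := by
  simp only [pres, G22]
  field_simp
  linear_combination -h

lemma rho_zero_eq_of_mul_deriv_deriv {k : ℝ} (hb : b t ≠ 0)
    (h : b t * deriv (deriv b) t = -(k + deriv b t ^ 2)) :
    rho k 0 β b t = (k + deriv b t ^ 2) / b t ^ 2 := by
  simp only [rho, G22, G00, G33]
  field_simp
  linear_combination h

end Einstein

section Sqrt

variable {q q' : ℝ → ℝ} {q'' t : ℝ}

lemma hasDerivAt_deriv_sqrt (hq : ∀ s, HasDerivAt q (q' s) s) (hq' : HasDerivAt q' q'' t)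
    (ht : 0 < q t) :
    HasDerivAt (deriv fun s => √(q s))
      ((2 * q t * q'' - q' t ^ 2) / (4 * q t * √(q t))) t := by
  have hpos : ∀ᶠ s in nhds t, 0 < q s :=
    (hq t).continuousAt.eventually (lt_mem_nhds ht)
  have hderiv : (deriv fun s => √(q s)) =ᶠ[nhds t] fun s => q' s / (2 * √(q s)) :=
    hpos.mono fun s hs => ((hq s).sqrt hs.ne').deriv
  have hquot := hq'.div (((hq t).sqrt ht.ne').const_mul 2) (by positivity)
  refine (hquot.congr_of_eventuallyEq hderiv).congr_deriv ?_
  field_simp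
  rw [Real.sq_sqrt ht.le]
  ring

lemma sqrt_mul_deriv_deriv_sqrt (hq : ∀ s, HasDerivAt q (q' s) s) (hq' : HasDerivAt q' q'' t)
    (ht : 0 < q t) :
    √(q t) * deriv (deriv fun s => √(q s)) t = q'' / 2 - deriv (fun s => √(q s)) t ^ 2 := by
  rw [(hasDerivAt_deriv_sqrt hq hq' ht).deriv, ((hq t).sqrt ht.ne').deriv]
  field_simp
  rw [Real.sq_sqrt ht.le]
  ring

end Sqrt

lemma hasDerivAt_quadratic (k α c s : ℝ) :
    HasDerivAt (fun s => -k * s ^ 2 + α * s + c) (α - 2 * k * s) s := by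
  refine ((((hasDerivAt_pow 2 s).const_mul (-k)).add
    ((hasDerivAt_id' s).const_mul α)).add_const c).congr_deriv ?_
  simp only [Nat.cast_ofNat, Nat.add_one_sub_one, pow_one, mul_one]
  ring

theorem eps_zero_stiff_fluid_general (k β α c : ℝ)
    (I : Set ℝ)
    (hpos : ∀ t ∈ I, 0 < -k * t ^ 2 + α * t + c) :
    ∀ t ∈ I,
      rho k 0 β (fun s => Real.sqrt (-k * s ^ 2 + α * s + c)) t =
          (α ^ 2 + 4 * k * c) / (4 * (-k * t ^ 2 + α * t + c) ^ 2) ∧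
      pres k 0 β (fun s => Real.sqrt (-k * s ^ 2 + α * s + c)) t =
          (α ^ 2 + 4 * k * c) / (4 * (-k * t ^ 2 + α * t + c) ^ 2) ∧
      rho k 0 β (fun s => Real.sqrt (-k * s ^ 2 + α * s + c)) t =
          pres k 0 β (fun s => Real.sqrt (-k * s ^ 2 + α * s + c)) t := by
  intro t ht
  set b : ℝ → ℝ := fun s => √(-k * s ^ 2 + α * s + c)
  have hq := hpos t ht
  have hb : 0 < b t := Real.sqrt_pos.mpr hq
  have hq' : HasDerivAt (fun s => α - 2 * k * s) (-2 * k) t := by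
    simpa using ((hasDerivAt_id t).const_mul (2 * k)).const_sub α
  have hbb'' : b t * deriv (deriv b) t = -(k + deriv b t ^ 2) := by
    linarith [sqrt_mul_deriv_deriv_sqrt (hasDerivAt_quadratic k α c) hq' hq]
  have hvalue : (k + deriv b t ^ 2) / b t ^ 2 =
      (α ^ 2 + 4 * k * c) / (4 * (-k * t ^ 2 + α * t + c) ^ 2) := by
    have hdisc : (α - 2 * k * t) ^ 2 + 4 * k * (-k * t ^ 2 + α * t + c) = α ^ 2 + 4 * k * c := by
      ring
    rw [((hasDerivAt_quadratic k α c t).sqrt hq.ne').deriv, div_pow, mul_pow,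
      Real.sq_sqrt hq.le, ← hdisc]
    generalize -k * t ^ 2 + α * t + c = Q at hq ⊢
    field_simp
    ring
  have hρ := rho_zero_eq_of_mul_deriv_deriv (β := β) hb.ne' hbb''
  have hp := pres_zero_eq_of_mul_deriv_deriv (β := β) hb.ne' hbb''
  exact ⟨hρ.trans hvalue, hp.trans hvalue, hρ.trans hp.symm⟩

/-- For `ε = 0`, `k ∈ {−1,0,1}`, `β > 0`, constants `α, c`, and
`b(t) = √(−k t² + α t + c)` on an open interval where the radicand is positive, the source
is a stiff fluid: `ρ(t) = p(t) = (α² + 4kc)/(4(−k t² + α t + c)²)`. -/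
theorem eps_zero_stiff_fluid (k β α c : ℝ) (hk : k = -1 ∨ k = 0 ∨ k = 1) (hβ : 0 < β)
    (I : Set ℝ) (hI : ∃ x y : ℝ, I = Set.Ioo x y)
    (hpos : ∀ t ∈ I, 0 < -k * t ^ 2 + α * t + c) :
    ∀ t ∈ I,
      rho k 0 β (fun s => Real.sqrt (-k * s ^ 2 + α * s + c)) t =
          (α ^ 2 + 4 * k * c) / (4 * (-k * t ^ 2 + α * t + c) ^ 2) ∧
      pres k 0 β (fun s => Real.sqrt (-k * s ^ 2 + α * s + c)) t =
          (α ^ 2 + 4 * k * c) / (4 * (-k * t ^ 2 + α * t + c) ^ 2) ∧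
      rho k 0 β (fun s => Real.sqrt (-k * s ^ 2 + α * s + c)) t =
          pres k 0 β (fun s => Real.sqrt (-k * s ^ 2 + α * s + c)) t :=
  eps_zero_stiff_fluid_general k β α c I hpos
end
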